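/- arXiv:1709.05796 — 6 statements merged into one kernel-verified Lean document; each statement's English description precedes it below -/
import Mathlib

section
/- For all real numbers A > 0, B > 0 and t > 0, the integral ∫₀ᵗ s^(−3/2) (t−s)^(−1/2) exp(−A/s) exp(−B/(t−s)) ds equals √(π/(A·t)) · exp(−(√A + √B)²/t). -/
/-!
The substitution `s = A t / (A + t u²)` maps `(0, ∞)` onto `(0, t)` and turns the integrand into
`(2 / √(A t)) e^{-(√A + √B)² / t} e^{-(u - c/u)²}` with `c = √A √B / t`. The remaining
Cauchy–Schlömilch integral `∫₀^∞ e^{-(u - c/u)²} du = √π / 2` comes from the Gaussian integral: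
the substitution `v = u - c/u` gives `∫₀^∞ (1 + c/u²) e^{-(u - c/u)²} du = √π`, and the inversion
`u ↦ c/u` shows that the two summands of this integral are equal.
-/

open MeasureTheory Real Set

variable {E : Type*} [NormedAddCommGroup E] [NormedSpace ℝ E]

section CauchySchlomilch

variable {c : ℝ}

lemma image_sub_div_Ioi (hc : 0 < c) : (fun u : ℝ => u - c / u) '' Ioi 0 = univ := by
  refine eq_univ_of_forall fun v => ?_
  set u := (v + √(v ^ 2 + 4 * c)) / 2 with hu
  have hu_pos : 0 < u := by
    have : |v| < √(v ^ 2 + 4 * c) := by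
      rw [← sqrt_sq_eq_abs]
      exact sqrt_lt_sqrt (sq_nonneg v) (by linarith)
    linarith [neg_abs_le v]
  have hroot : u ^ 2 - v * u - c = 0 := by
    linear_combination (sq_sqrt (by positivity : 0 ≤ v ^ 2 + 4 * c)) / 4
  refine ⟨u, hu_pos, ?_⟩
  field_simp
  linear_combination hroot

lemma hasDerivAt_sub_div {u : ℝ} (hu : u ≠ 0) :
    HasDerivAt (fun u : ℝ => u - c / u) (1 + c / u ^ 2) u := by
  simpa only [← div_eq_mul_inv, mul_neg, sub_neg_eq_add] using
    (hasDerivAt_id' u).fun_sub ((hasDerivAt_inv hu).const_mul c)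

lemma strictMonoOn_sub_div (hc : 0 < c) : StrictMonoOn (fun u : ℝ => u - c / u) (Ioi 0) :=
  fun _ ha _ _ hab => sub_lt_sub hab (div_lt_div_of_pos_left hc ha hab)

lemma integral_comp_sub_div_Ioi (hc : 0 < c) (g : ℝ → E) :
    ∫ u in Ioi 0, (1 + c / u ^ 2) • g (u - c / u) = ∫ v, g v := by
  conv_rhs =>
    rw [← setIntegral_univ, ← image_sub_div_Ioi hc,
      integral_image_eq_integral_abs_deriv_smul measurableSet_Ioi
        (fun u hu => (hasDerivAt_sub_div (ne_of_gt hu)).hasDerivWithinAt)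
        (strictMonoOn_sub_div hc).injOn]
  refine setIntegral_congr_fun measurableSet_Ioi fun u _ => ?_
  rw [abs_of_pos (by positivity)]

lemma integrableOn_comp_sub_div_Ioi_iff (hc : 0 < c) (g : ℝ → E) :
    IntegrableOn (fun u => (1 + c / u ^ 2) • g (u - c / u)) (Ioi 0) ↔ Integrable g := by
  rw [← integrableOn_univ, ← image_sub_div_Ioi hc,
    integrableOn_image_iff_integrableOn_abs_deriv_smul measurableSet_Ioi
      (fun u hu => (hasDerivAt_sub_div (ne_of_gt hu)).hasDerivWithinAt)
      (strictMonoOn_sub_div hc).injOn]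
  refine integrableOn_congr_fun (fun u _ => ?_) measurableSet_Ioi
  rw [abs_of_pos (by positivity)]

lemma integral_comp_div_Ioi (hc : 0 < c) (g : ℝ → E) :
    ∫ u in Ioi 0, (c / u ^ 2) • g (c / u) = ∫ u in Ioi 0, g u := by
  have himage : (fun u : ℝ => c / u) '' Ioi 0 = Ioi 0 := by
    refine Subset.antisymm (image_subset_iff.2 fun u hu => div_pos hc hu) fun v hv => ?_
    exact ⟨c / v, div_pos hc hv, div_div_cancel₀ hc.ne'⟩
  have hderiv : ∀ u ∈ Ioi (0 : ℝ), HasDerivWithinAt (fun u => c / u) (-(c / u ^ 2)) (Ioi 0) u :=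
    fun u hu => by
      simpa only [← div_eq_mul_inv, mul_neg] using
        ((hasDerivAt_inv (ne_of_gt hu)).const_mul c).hasDerivWithinAt
  have hinj : InjOn (fun u : ℝ => c / u) (Ioi 0) :=
    fun a _ b _ hab => by rwa [div_eq_div_iff_comm, div_left_inj' hc.ne'] at hab
  conv_rhs =>
    rw [← himage, integral_image_eq_integral_abs_deriv_smul measurableSet_Ioi hderiv hinj]
  refine setIntegral_congr_fun measurableSet_Ioi fun u (hu : 0 < u) => ?_
  rw [abs_neg, abs_of_pos (by positivity)]

lemma integral_exp_neg_sq_sub_div_Ioi (hc : 0 < c) :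
    ∫ u in Ioi 0, exp (-(u - c / u) ^ 2) = √π / 2 := by
  set f := fun u : ℝ => exp (-(u - c / u) ^ 2)
  have hf_div : ∀ u, f (c / u) = f u := fun u => by
    show exp (-(c / u - c / (c / u)) ^ 2) = exp (-(u - c / u) ^ 2)
    rw [div_div_cancel₀ hc.ne']
    ring_nf
  have htotal : IntegrableOn (fun u => (1 + c / u ^ 2) * f u) (Ioi 0) :=
    (integrableOn_comp_sub_div_Ioi_iff hc fun v => exp (-v ^ 2)).2
      (by simpa using integrable_exp_neg_mul_sq one_pos)
  have hf : IntegrableOn f (Ioi 0) := by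
    refine htotal.mono' (by fun_prop : Measurable f).aestronglyMeasurable (ae_of_all _ fun u => ?_)
    rw [norm_of_nonneg (exp_pos _).le]
    exact le_mul_of_one_le_left (exp_pos _).le (le_add_of_nonneg_right (by positivity))
  have hf_div_sq : IntegrableOn (fun u => c / u ^ 2 * f u) (Ioi 0) :=
    (htotal.sub hf).congr_fun (fun u _ => by simp only [Pi.sub_apply]; ring) measurableSet_Ioi
  have hsplit : ∫ u in Ioi 0, (1 + c / u ^ 2) * f u
      = (∫ u in Ioi 0, f u) + ∫ u in Ioi 0, c / u ^ 2 * f u := by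
    rw [← integral_add hf hf_div_sq]
    exact setIntegral_congr_fun measurableSet_Ioi fun u _ => by ring
  have hreflect : ∫ u in Ioi 0, c / u ^ 2 * f u = ∫ u in Ioi 0, f u := by
    rw [← integral_comp_div_Ioi hc f]
    exact setIntegral_congr_fun measurableSet_Ioi fun u _ => by
      simp only [smul_eq_mul, hf_div u]
  have htotal_eq : ∫ u in Ioi 0, (1 + c / u ^ 2) * f u = √π := by
    have hgauss : ∫ v, exp (-v ^ 2) = √π := by simpa using integral_gaussian 1
    simpa using (integral_comp_sub_div_Ioi hc fun v => exp (-v ^ 2)).trans hgauss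
  linarith

end CauchySchlomilch

section Substitution

variable {a t : ℝ}

lemma image_div_add_mul_sq_Ioi (ha : 0 < a) (ht : 0 < t) :
    (fun u : ℝ => a * t / (a + t * u ^ 2)) '' Ioi 0 = Ioo 0 t := by
  ext s
  constructor
  · rintro ⟨u, hu : 0 < u, rfl⟩
    refine ⟨by positivity, (div_lt_iff₀ (by positivity)).2 ?_⟩
    nlinarith [mul_pos (mul_pos ht ht) (pow_pos hu 2)]
  · rintro ⟨hs, hst⟩
    have hts : 0 < t - s := sub_pos.2 hst
    refine ⟨√(a * (t - s) / (t * s)), mem_Ioi.2 (by positivity), ?_⟩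
    simp only [sq_sqrt (by positivity : 0 ≤ a * (t - s) / (t * s))]
    field_simp
    ring

lemma hasDerivAt_div_add_mul_sq (ha : 0 < a) (ht : 0 < t) (u : ℝ) :
    HasDerivAt (fun u : ℝ => a * t / (a + t * u ^ 2))
      (-(2 * a * t ^ 2 * u / (a + t * u ^ 2) ^ 2)) u := by
  have hden : HasDerivAt (fun u : ℝ => a + t * u ^ 2) (t * (2 * u)) u := by
    simpa using ((hasDerivAt_pow 2 u).const_mul t).const_add a
  exact ((hasDerivAt_const u (a * t)).fun_div hden (by positivity)).congr_deriv (by ring)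

lemma strictAntiOn_div_add_mul_sq (ha : 0 < a) (ht : 0 < t) :
    StrictAntiOn (fun u : ℝ => a * t / (a + t * u ^ 2)) (Ioi 0) := fun u (hu : 0 < u) v _ huv =>
  div_lt_div_of_pos_left (by positivity) (by positivity) (by gcongr)

lemma integral_comp_div_add_mul_sq_Ioi (ha : 0 < a) (ht : 0 < t) (g : ℝ → E) :
    ∫ u in Ioi 0, (2 * a * t ^ 2 * u / (a + t * u ^ 2) ^ 2) • g (a * t / (a + t * u ^ 2))
      = ∫ s in Ioo 0 t, g s := by
  rw [← image_div_add_mul_sq_Ioi ha ht,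
    integral_image_eq_integral_abs_deriv_smul measurableSet_Ioi
      (fun u _ => (hasDerivAt_div_add_mul_sq ha ht u).hasDerivWithinAt)
      (strictAntiOn_div_add_mul_sq ha ht).injOn]
  refine setIntegral_congr_fun measurableSet_Ioi fun u (hu : 0 < u) => ?_
  rw [abs_neg, abs_of_pos (by positivity)]

end Substitution

lemma rpow_neg_three_halves_mul_rpow_neg_half {x y : ℝ} (hx : 0 < x) (hy : 0 < y) :
    x ^ (-(3 : ℝ) / 2) * y ^ (-(1 : ℝ) / 2) = (x * √(x * y))⁻¹ := by
  rw [sqrt_eq_rpow, mul_inv, ← rpow_neg (by positivity), mul_rpow hx.le hy.le, ← mul_assoc,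
    ← rpow_neg_one, ← rpow_add hx]
  norm_num

noncomputable def convIntegrand (A B t s : ℝ) : ℝ :=
  s ^ (-(3 : ℝ) / 2) * (t - s) ^ (-(1 : ℝ) / 2) * exp (-A / s) * exp (-B / (t - s))

lemma jacobian_smul_convIntegrand {A B t u : ℝ} (hA : 0 < A) (hB : 0 ≤ B) (ht : 0 < t)
    (hu : 0 < u) :
    (2 * A * t ^ 2 * u / (A + t * u ^ 2) ^ 2) • convIntegrand A B t (A * t / (A + t * u ^ 2))
      = 2 / √(A * t) * exp (-(√A + √B) ^ 2 / t) * exp (-(u - √A * √B / t / u) ^ 2) := by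
  set w := A + t * u ^ 2
  have hw : 0 < w := by positivity
  have hAt : √(A * t) ^ 2 = A * t := sq_sqrt (by positivity)
  have hts : t - A * t / w = t ^ 2 * u ^ 2 / w := by
    field_simp
    ring
  have hsqrt : √(A * t / w * (t ^ 2 * u ^ 2 / w)) = t * u * √(A * t) / w := by
    rw [← sqrt_sq (by positivity : 0 ≤ t * u * √(A * t) / w)]
    congr 1
    rw [div_pow, mul_pow, hAt]
    field_simp
  have hpow : 2 * A * t ^ 2 * u / w ^ 2 *
      ((A * t / w) ^ (-(3 : ℝ) / 2) * (t ^ 2 * u ^ 2 / w) ^ (-(1 : ℝ) / 2)) = 2 / √(A * t) := by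
    rw [rpow_neg_three_halves_mul_rpow_neg_half (by positivity) (by positivity), hsqrt]
    field_simp
  have hexp : -A / (A * t / w) + -B / (t ^ 2 * u ^ 2 / w)
      = -(√A + √B) ^ 2 / t + -(u - √A * √B / t / u) ^ 2 := by
    have hA' : √A ^ 2 = A := sq_sqrt hA.le
    have hB' : √B ^ 2 = B := sq_sqrt hB
    simp only [w]
    field_simp
    linear_combination (t * u ^ 2 + √B ^ 2) * hA' + (t * u ^ 2 + A) * hB'
  calc (2 * A * t ^ 2 * u / w ^ 2) • convIntegrand A B t (A * t / w)
      = 2 * A * t ^ 2 * u / w ^ 2 *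
          ((A * t / w) ^ (-(3 : ℝ) / 2) * (t ^ 2 * u ^ 2 / w) ^ (-(1 : ℝ) / 2))
        * exp (-A / (A * t / w) + -B / (t ^ 2 * u ^ 2 / w)) := by
        rw [convIntegrand, hts, exp_add, smul_eq_mul]
        ring
    _ = _ := by rw [hpow, hexp, exp_add, mul_assoc]

theorem bessel_lemma1_integral (A B t : ℝ) (hA : 0 < A) (hB : 0 < B) (ht : 0 < t) :
    ∫ s in Set.Ioo (0:ℝ) t,
        s ^ (-(3:ℝ)/2) * (t - s) ^ (-(1:ℝ)/2) * Real.exp (-A/s) * Real.exp (-B/(t-s))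
      = Real.sqrt (π / (A * t)) * Real.exp (-(Real.sqrt A + Real.sqrt B)^2 / t) := by
  have hc : 0 < √A * √B / t := by positivity
  calc ∫ s in Ioo 0 t, convIntegrand A B t s
      = ∫ u in Ioi 0, (2 * A * t ^ 2 * u / (A + t * u ^ 2) ^ 2) •
          convIntegrand A B t (A * t / (A + t * u ^ 2)) :=
        (integral_comp_div_add_mul_sq_Ioi hA ht _).symm
    _ = ∫ u in Ioi 0,
          2 / √(A * t) * exp (-(√A + √B) ^ 2 / t) * exp (-(u - √A * √B / t / u) ^ 2) :=
        setIntegral_congr_fun measurableSet_Ioi fun u hu =>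
          jacobian_smul_convIntegrand hA hB.le ht hu
    _ = 2 / √(A * t) * exp (-(√A + √B) ^ 2 / t) * (√π / 2) := by
        rw [integral_const_mul, integral_exp_neg_sq_sub_div_Ioi hc]
    _ = √(π / (A * t)) * exp (-(√A + √B) ^ 2 / t) := by
        rw [sqrt_div pi_pos.le]
        ring
end

section
/- For all real numbers c > 0, d > 0 and t > 0, the integral ∫₀ᵗ s^(−1/2) (t−s)^(−1/2) exp(−c/s) exp(−d/(t−s)) ds equals 2√π · ∫_{(√c+√d)/√t}^{∞} exp(−u²) du. -/
/-!
Write `s^(-1/2) e^(-c/s) = ∫_c^∞ s^(-3/2) e^(-x/s) dx` and exchange the order of integration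
(Tonelli). The inner integral over `s ∈ (0, t)` then has a closed form: with
`Φ z = ∫_z^∞ e^(-u²) du` (`gaussianTail`) and `ξ± = (√x (t - s) ∓ √d s) / √(t s (t - s))`
(`tailArg √x (±√d) t s`), the function `(e^(-(√x + √d)²/t) Φ ξ₊ + e^(-(√x - √d)²/t) Φ ξ₋) / √(x t)`
(`tailPrimitive`) is a primitive of the integrand, because `(√x ± √d)²/t + ξ±² = x/s + d/(t - s)`.
It tends to `0` at `s = 0` and to `√π e^(-(√x + √d)²/t) / √(x t)` at `s = t`, and this last
expression is the derivative in `x` of `-2 √π Φ ((√x + √d) / √t)`.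
-/

open MeasureTheory Real Filter Set Topology Function

lemma integral_integral_swap_of_nonneg {α β : Type*} [MeasurableSpace α] [MeasurableSpace β]
    {μ : Measure α} {ν : Measure β} [SFinite μ] [SFinite ν] {f : α → β → ℝ}
    (hf : Measurable (uncurry f)) (hf_nonneg : ∀ x y, 0 ≤ f x y)
    (hfx : ∀ᵐ x ∂μ, Integrable (f x) ν) (hfy : ∀ᵐ y ∂ν, Integrable (fun x => f x y) μ) :
    ∫ x, ∫ y, f x y ∂ν ∂μ = ∫ y, ∫ x, f x y ∂μ ∂ν := by
  rw [integral_eq_lintegral_of_nonneg_ae (ae_of_all _ fun x => integral_nonneg (hf_nonneg x))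
      hf.stronglyMeasurable.integral_prod_right.aestronglyMeasurable,
    integral_eq_lintegral_of_nonneg_ae (ae_of_all _ fun y => integral_nonneg (hf_nonneg · y))
      hf.stronglyMeasurable.integral_prod_left.aestronglyMeasurable]
  congr 1
  calc ∫⁻ x, ENNReal.ofReal (∫ y, f x y ∂ν) ∂μ
      = ∫⁻ x, ∫⁻ y, ENNReal.ofReal (f x y) ∂ν ∂μ := lintegral_congr_ae <| hfx.mono fun x hx =>
        ofReal_integral_eq_lintegral_ofReal hx (ae_of_all _ (hf_nonneg x))
    _ = ∫⁻ y, ∫⁻ x, ENNReal.ofReal (f x y) ∂μ ∂ν :=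
        lintegral_lintegral_swap (ENNReal.measurable_ofReal.comp hf).aemeasurable
    _ = ∫⁻ y, ENNReal.ofReal (∫ x, f x y ∂μ) ∂ν := lintegral_congr_ae <| hfy.mono fun y hy =>
        (ofReal_integral_eq_lintegral_ofReal hy (ae_of_all _ (hf_nonneg · y))).symm

section ImproperFTC

variable {a b la lb : ℝ} {F f : ℝ → ℝ}

lemma exists_continuousOn_Icc_hasDerivAt_of_tendsto (hab : a < b)
    (hderiv : ∀ x ∈ Ioo a b, HasDerivAt F (f x) x)
    (ha : Tendsto F (𝓝[>] a) (𝓝 la)) (hb : Tendsto F (𝓝[<] b) (𝓝 lb)) :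
    ∃ G : ℝ → ℝ, ContinuousOn G (Icc a b) ∧ (∀ x ∈ Ioo a b, HasDerivAt G (f x) x) ∧
      G a = la ∧ G b = lb := by
  have hF : ContinuousOn F (Ioo a b) := fun x hx => (hderiv x hx).continuousAt.continuousWithinAt
  refine ⟨extendFrom (Ioo a b) F, continuousOn_Icc_extendFrom_Ioo hF ha hb, fun x hx => ?_,
    eq_lim_at_left_extendFrom_Ioo hab ha, eq_lim_at_right_extendFrom_Ioo hab hb⟩
  refine (hderiv x hx).congr_of_eventuallyEq ?_
  filter_upwards [Ioo_mem_nhds hx.1 hx.2] with y hy using extendFrom_extends hF y hy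

lemma integrableOn_Ioo_deriv_of_nonneg (hab : a < b)
    (hderiv : ∀ x ∈ Ioo a b, HasDerivAt F (f x) x) (hf : ∀ x ∈ Ioo a b, 0 ≤ f x)
    (ha : Tendsto F (𝓝[>] a) (𝓝 la)) (hb : Tendsto F (𝓝[<] b) (𝓝 lb)) :
    IntegrableOn f (Ioo a b) := by
  obtain ⟨G, hG, hGf, -, -⟩ := exists_continuousOn_Icc_hasDerivAt_of_tendsto hab hderiv ha hb
  exact (intervalIntegral.integrableOn_deriv_of_nonneg hG hGf hf).mono_set Ioo_subset_Ioc_self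

lemma integral_Ioo_of_hasDerivAt_of_nonneg (hab : a < b)
    (hderiv : ∀ x ∈ Ioo a b, HasDerivAt F (f x) x) (hf : ∀ x ∈ Ioo a b, 0 ≤ f x)
    (ha : Tendsto F (𝓝[>] a) (𝓝 la)) (hb : Tendsto F (𝓝[<] b) (𝓝 lb)) :
    ∫ x in Ioo a b, f x = lb - la := by
  obtain ⟨G, hG, hGf, rfl, rfl⟩ := exists_continuousOn_Icc_hasDerivAt_of_tendsto hab hderiv ha hb
  rw [← integral_Ioc_eq_integral_Ioo, ← intervalIntegral.integral_of_le hab.le]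
  exact intervalIntegral.integral_eq_sub_of_hasDerivAt_of_le hab.le hG hGf
    ((intervalIntegrable_iff_integrableOn_Ioc_of_le hab.le).2
      (intervalIntegral.integrableOn_deriv_of_nonneg hG hGf hf))

end ImproperFTC

lemma integral_exp_neg_div_Ioi {s : ℝ} (hs : 0 < s) (c : ℝ) :
    ∫ x in Ioi c, exp (-x / s) = s * exp (-c / s) := by
  have h := integral_exp_mul_Ioi (neg_lt_zero.2 (inv_pos.2 hs)) c
  simp only [neg_mul, ← neg_div, inv_mul_eq_div] at h
  rw [h, div_neg, neg_div, neg_neg, div_inv_eq_mul, mul_comm]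

lemma integrableOn_exp_neg_div_Ioi {s : ℝ} (hs : 0 < s) (c : ℝ) :
    IntegrableOn (fun x => exp (-x / s)) (Ioi c) := by
  simpa [neg_div, div_eq_inv_mul] using integrableOn_exp_mul_Ioi (neg_lt_zero.2 (inv_pos.2 hs)) c

noncomputable def gaussianTail (x : ℝ) : ℝ := ∫ u in Ioi x, exp (-u ^ 2)

lemma integrable_exp_neg_sq : Integrable fun u : ℝ => exp (-u ^ 2) := by
  simpa using integrable_exp_neg_mul_sq one_pos

lemma gaussianTail_eq_sub_intervalIntegral (x : ℝ) :
    gaussianTail x = gaussianTail 0 - ∫ u in (0)..x, exp (-u ^ 2) := by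
  rw [← intervalIntegral.integral_Ioi_sub_Ioi' integrable_exp_neg_sq.integrableOn
    integrable_exp_neg_sq.integrableOn, gaussianTail, gaussianTail, sub_sub_cancel]

lemma hasDerivAt_gaussianTail (x : ℝ) : HasDerivAt gaussianTail (-exp (-x ^ 2)) x := by
  rw [funext gaussianTail_eq_sub_intervalIntegral, ← zero_sub]
  exact (hasDerivAt_const x _).sub
    ((by fun_prop : Continuous fun u : ℝ => exp (-u ^ 2)).integral_hasStrictDerivAt 0 x).hasDerivAt

lemma tendsto_gaussianTail_atTop : Tendsto gaussianTail atTop (𝓝 0) := by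
  have h := tendsto_setIntegral_of_antitone (μ := volume) (f := fun u : ℝ => exp (-u ^ 2))
    (fun x : ℝ => measurableSet_Ioi) (fun _ _ hxy => Ioi_subset_Ioi hxy)
    ⟨0, integrable_exp_neg_sq.integrableOn⟩
  rwa [show ⋂ x : ℝ, Ioi x = ∅ from iInter_eq_empty_iff.2 fun u => ⟨u, lt_irrefl u⟩,
    setIntegral_empty] at h

lemma tendsto_gaussianTail_atBot : Tendsto gaussianTail atBot (𝓝 √π) := by
  have h := tendsto_setIntegral_of_monotone (μ := volume) (f := fun u : ℝ => exp (-u ^ 2))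
    (fun x : ℝ => measurableSet_Ioi (a := -x)) (fun _ _ hxy => Ioi_subset_Ioi (neg_le_neg hxy))
    integrable_exp_neg_sq.integrableOn
  have hπ : ∫ u, exp (-u ^ 2) = √π := by simpa using integral_gaussian 1
  rw [iUnion_eq_univ_iff.2 fun u => ⟨1 - u, by simp⟩, setIntegral_univ, hπ] at h
  have h' := h.comp tendsto_neg_atBot_atTop
  simp only [comp_def, neg_neg] at h'
  exact h'

lemma integral_Ioi_sqrt_pi_div_mul_exp {c t : ℝ} (hc : 0 < c) (ht : 0 < t) (b : ℝ) :
    ∫ x in Ioi c, √π / (√x * √t) * exp (-(√x + b) ^ 2 / t) =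
      2 * √π * gaussianTail ((√c + b) / √t) := by
  have hderiv : ∀ x ∈ Ici c, HasDerivAt (fun x => -(2 * √π * gaussianTail ((√x + b) / √t)))
      (√π / (√x * √t) * exp (-(√x + b) ^ 2 / t)) x := by
    intro x hx
    have hx0 : 0 < x := hc.trans_le hx
    have := sqrt_pos.2 hx0
    have := sqrt_pos.2 ht
    refine ((((hasDerivAt_gaussianTail _).comp x (((hasDerivAt_sqrt hx0.ne').add_const b).div_const
      √t)).const_mul (2 * √π)).neg).congr_deriv ?_
    rw [div_pow, sq_sqrt ht.le]
    field_simp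
  have hlim : Tendsto (fun x => -(2 * √π * gaussianTail ((√x + b) / √t))) atTop (𝓝 0) := by
    simpa using ((tendsto_gaussianTail_atTop.comp ((tendsto_atTop_add_const_right _ b
      tendsto_sqrt_atTop).atTop_div_const (sqrt_pos.2 ht))).const_mul (2 * √π)).neg
  rw [integral_Ioi_of_hasDerivAt_of_nonneg' hderiv (fun x _ => by positivity) hlim]
  ring

noncomputable def tailArg (a b t s : ℝ) : ℝ := (a * (t - s) - b * s) / (√t * √s * √(t - s))

noncomputable def tailPrimitive (a b t s : ℝ) : ℝ :=
  (exp (-(a + b) ^ 2 / t) * gaussianTail (tailArg a b t s) +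
    exp (-(a + -b) ^ 2 / t) * gaussianTail (tailArg a (-b) t s)) / (a * √t)

noncomputable def passageKernel (c d t s : ℝ) : ℝ :=
  exp (-c / s) * exp (-d / (t - s)) / (√s ^ 3 * √(t - s))

section TailPrimitive

variable {a b c d t s : ℝ}

lemma add_sq_div_add_tailArg_sq (hs : 0 < s) (hst : s < t) :
    (a + b) ^ 2 / t + tailArg a b t s ^ 2 = a ^ 2 / s + b ^ 2 / (t - s) := by
  have ht : t ≠ 0 := (hs.trans hst).ne'
  have hts : 0 < t - s := sub_pos.2 hst
  rw [tailArg, div_pow, mul_pow, mul_pow, sq_sqrt (hs.trans hst).le, sq_sqrt hs.le,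
    sq_sqrt hts.le]
  field_simp
  ring

lemma exp_mul_exp_neg_tailArg_sq (hs : 0 < s) (hst : s < t) :
    exp (-(a + b) ^ 2 / t) * exp (-tailArg a b t s ^ 2) =
      exp (-a ^ 2 / s) * exp (-b ^ 2 / (t - s)) := by
  rw [← exp_add, ← exp_add, neg_div, neg_div, neg_div, ← neg_add, ← neg_add,
    add_sq_div_add_tailArg_sq hs hst]

lemma hasDerivAt_tailArg (hs : 0 < s) (hst : s < t) :
    HasDerivAt (tailArg a b t)
      (-(√t * (a * (t - s) + b * s)) / (2 * √s ^ 3 * ((t - s) * √(t - s)))) s := by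
  have hts : 0 < t - s := sub_pos.2 hst
  have hN : HasDerivAt (fun x => a * (t - x) - b * x) (-(a + b)) s :=
    (((hasDerivAt_id s).const_sub t).const_mul a |>.sub ((hasDerivAt_id s).const_mul b)).congr_deriv
      (by ring)
  have hD : HasDerivAt (fun x => √t * √x * √(t - x))
      (√t * (1 / (2 * √s)) * √(t - s) + √t * √s * (1 / (2 * √(t - s)) * -1)) s :=
    ((hasDerivAt_sqrt hs.ne').const_mul √t).mul
      ((hasDerivAt_sqrt hts.ne').comp s ((hasDerivAt_id s).const_sub t))
  have := sqrt_pos.2 hs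
  have := sqrt_pos.2 hts
  have := sqrt_pos.2 (hs.trans hst)
  refine (hN.div hD (by positivity)).congr_deriv ?_
  have hs2 := sq_sqrt hs.le
  have hts2 := sq_sqrt hts.le
  generalize √s = p at *
  generalize √(t - s) = q at *
  obtain rfl : t = p ^ 2 + q ^ 2 := by linarith
  subst hs2
  field_simp
  rw [sq_sqrt (by positivity)]
  ring

lemma hasDerivAt_exp_mul_gaussianTail_tailArg (hs : 0 < s) (hst : s < t) :
    HasDerivAt (fun x => exp (-(a + b) ^ 2 / t) * gaussianTail (tailArg a b t x))
      (√t * (a * (t - s) + b * s) / (2 * √s ^ 3 * ((t - s) * √(t - s))) *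
        (exp (-a ^ 2 / s) * exp (-b ^ 2 / (t - s)))) s := by
  refine (((hasDerivAt_gaussianTail _).comp s (hasDerivAt_tailArg hs hst)).const_mul
    _).congr_deriv ?_
  rw [← exp_mul_exp_neg_tailArg_sq hs hst]
  ring

lemma hasDerivAt_tailPrimitive (hc : 0 < c) (hd : 0 ≤ d) (hs : 0 < s) (hst : s < t) :
    HasDerivAt (tailPrimitive √c √d t) (passageKernel c d t s) s := by
  obtain ⟨a, ha, rfl⟩ : ∃ a, 0 < a ∧ c = a ^ 2 := ⟨√c, sqrt_pos.2 hc, (sq_sqrt hc.le).symm⟩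
  obtain ⟨b, hb, rfl⟩ : ∃ b, 0 ≤ b ∧ d = b ^ 2 := ⟨√d, sqrt_nonneg d, (sq_sqrt hd).symm⟩
  rw [sqrt_sq ha.le, sqrt_sq hb]
  have hts : 0 < t - s := sub_pos.2 hst
  have := sqrt_pos.2 hs
  have := sqrt_pos.2 hts
  have := sqrt_pos.2 (hs.trans hst)
  refine (((hasDerivAt_exp_mul_gaussianTail_tailArg hs hst).add
    (hasDerivAt_exp_mul_gaussianTail_tailArg hs hst)).div_const _).congr_deriv ?_
  rw [passageKernel, neg_sq]
  field_simp
  ring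

lemma tendsto_inv_sqrt_mul_sqrt_mul_sqrt_sub {l : Filter ℝ} {s₀ : ℝ} (hl : l ≤ 𝓝 s₀)
    (hs₀ : s₀ = 0 ∨ s₀ = t) (hIoo : ∀ᶠ s in l, s ∈ Ioo 0 t) :
    Tendsto (fun s => (√t * √s * √(t - s))⁻¹) l atTop := by
  refine Tendsto.inv_tendsto_nhdsGT_zero (tendsto_nhdsWithin_iff.2 ⟨?_, ?_⟩)
  · have h := ((by fun_prop : Continuous fun s => √t * √s * √(t - s)).tendsto s₀).mono_left hl
    rcases hs₀ with rfl | rfl <;> simpa using h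
  · filter_upwards [hIoo] with s hs
    have := sqrt_pos.2 hs.1
    have := sqrt_pos.2 (sub_pos.2 hs.2)
    have := sqrt_pos.2 (hs.1.trans hs.2)
    exact mem_Ioi.2 (by positivity)

lemma tendsto_tailArg_atTop {l : Filter ℝ} {s₀ : ℝ} (hl : l ≤ 𝓝 s₀) (hs₀ : s₀ = 0 ∨ s₀ = t)
    (hIoo : ∀ᶠ s in l, s ∈ Ioo 0 t) (hpos : 0 < a * (t - s₀) - b * s₀) :
    Tendsto (tailArg a b t) l atTop :=
  (((by fun_prop : Continuous fun s => a * (t - s) - b * s).tendsto s₀).mono_left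
    hl).pos_mul_atTop hpos (tendsto_inv_sqrt_mul_sqrt_mul_sqrt_sub hl hs₀ hIoo)

lemma tendsto_tailArg_atBot {l : Filter ℝ} {s₀ : ℝ} (hl : l ≤ 𝓝 s₀) (hs₀ : s₀ = 0 ∨ s₀ = t)
    (hIoo : ∀ᶠ s in l, s ∈ Ioo 0 t) (hneg : a * (t - s₀) - b * s₀ < 0) :
    Tendsto (tailArg a b t) l atBot :=
  (((by fun_prop : Continuous fun s => a * (t - s) - b * s).tendsto s₀).mono_left
    hl).neg_mul_atTop hneg (tendsto_inv_sqrt_mul_sqrt_mul_sqrt_sub hl hs₀ hIoo)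

lemma tendsto_tailPrimitive_nhdsGT_zero (ha : 0 < a) (ht : 0 < t) :
    Tendsto (tailPrimitive a b t) (𝓝[>] 0) (𝓝 0) := by
  have hIoo : ∀ᶠ s in 𝓝[>] 0, s ∈ Ioo 0 t := Ioo_mem_nhdsGT ht
  have hpos : ∀ b : ℝ, 0 < a * (t - 0) - b * 0 := fun _ => by simpa using mul_pos ha ht
  unfold tailPrimitive
  simpa using (((tendsto_gaussianTail_atTop.comp (tendsto_tailArg_atTop (b := b)
      nhdsWithin_le_nhds (.inl rfl) hIoo (hpos b))).const_mul (exp (-(a + b) ^ 2 / t))).add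
    ((tendsto_gaussianTail_atTop.comp (tendsto_tailArg_atTop (b := -b) nhdsWithin_le_nhds
      (.inl rfl) hIoo (hpos (-b)))).const_mul (exp (-(a + -b) ^ 2 / t)))).div_const (a * √t)

lemma tendsto_tailPrimitive_nhdsLT (hb : 0 < b) (ht : 0 < t) :
    Tendsto (tailPrimitive a b t) (𝓝[<] t) (𝓝 (√π / (a * √t) * exp (-(a + b) ^ 2 / t))) := by
  have hIoo : ∀ᶠ s in 𝓝[<] t, s ∈ Ioo 0 t := Ioo_mem_nhdsLT ht
  unfold tailPrimitive
  rw [show √π / (a * √t) * exp (-(a + b) ^ 2 / t) =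
    (exp (-(a + b) ^ 2 / t) * √π + exp (-(a + -b) ^ 2 / t) * 0) / (a * √t) by ring]
  exact (((tendsto_gaussianTail_atBot.comp (tendsto_tailArg_atBot nhdsWithin_le_nhds
      (.inr rfl) hIoo (by simpa using mul_pos hb ht))).const_mul (exp (-(a + b) ^ 2 / t))).add
    ((tendsto_gaussianTail_atTop.comp (tendsto_tailArg_atTop (b := -b) nhdsWithin_le_nhds
      (.inr rfl) hIoo (by simpa using mul_pos hb ht))).const_mul
        (exp (-(a + -b) ^ 2 / t)))).div_const (a * √t)

end TailPrimitive

section PassageKernel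

variable {c d t s : ℝ}

lemma passageKernel_nonneg (c d t s : ℝ) : 0 ≤ passageKernel c d t s := by
  unfold passageKernel
  positivity

lemma integrableOn_passageKernel_Ioo (hc : 0 < c) (hd : 0 < d) (ht : 0 < t) :
    IntegrableOn (passageKernel c d t) (Ioo 0 t) :=
  integrableOn_Ioo_deriv_of_nonneg ht (fun _ hs => hasDerivAt_tailPrimitive hc hd.le hs.1 hs.2)
    (fun s _ => passageKernel_nonneg c d t s) (tendsto_tailPrimitive_nhdsGT_zero (sqrt_pos.2 hc) ht)
    (tendsto_tailPrimitive_nhdsLT (sqrt_pos.2 hd) ht)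

lemma integral_passageKernel_Ioo (hc : 0 < c) (hd : 0 < d) (ht : 0 < t) :
    ∫ s in Ioo 0 t, passageKernel c d t s = √π / (√c * √t) * exp (-(√c + √d) ^ 2 / t) := by
  rw [integral_Ioo_of_hasDerivAt_of_nonneg ht
    (fun _ hs => hasDerivAt_tailPrimitive hc hd.le hs.1 hs.2)
    (fun s _ => passageKernel_nonneg c d t s) (tendsto_tailPrimitive_nhdsGT_zero (sqrt_pos.2 hc) ht)
    (tendsto_tailPrimitive_nhdsLT (sqrt_pos.2 hd) ht), sub_zero]

lemma integrableOn_passageKernel_Ioi (hs : 0 < s) (c : ℝ) :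
    IntegrableOn (fun x => passageKernel x d t s) (Ioi c) := by
  simp only [passageKernel, mul_div_assoc]
  exact (integrableOn_exp_neg_div_Ioi hs c).mul_const _

lemma integral_passageKernel_Ioi (hs : 0 < s) (hst : s < t) (c : ℝ) :
    ∫ x in Ioi c, passageKernel x d t s =
      s ^ (-(1 : ℝ) / 2) * (t - s) ^ (-(1 : ℝ) / 2) * exp (-c / s) * exp (-d / (t - s)) := by
  have hts : 0 < t - s := sub_pos.2 hst
  have hrpow : ∀ {y : ℝ}, 0 < y → y ^ (-(1 : ℝ) / 2) = (√y)⁻¹ := fun hy => by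
    rw [neg_div, rpow_neg hy.le, ← sqrt_eq_rpow]
  simp only [passageKernel, mul_div_assoc]
  rw [integral_mul_const, integral_exp_neg_div_Ioi hs, hrpow hs, hrpow hts]
  have := sqrt_pos.2 hs
  have := sqrt_pos.2 hts
  nth_rw 1 [← sq_sqrt hs.le]
  field_simp

end PassageKernel

theorem bessel_lemma2_integral (c d t : ℝ) (hc : 0 < c) (hd : 0 < d) (ht : 0 < t) :
    ∫ s in Set.Ioo (0:ℝ) t,
        s ^ (-(1:ℝ)/2) * (t - s) ^ (-(1:ℝ)/2) * Real.exp (-c/s) * Real.exp (-d/(t-s))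
      = 2 * Real.sqrt π *
        ∫ u in Set.Ioi ((Real.sqrt c + Real.sqrt d) / Real.sqrt t), Real.exp (-u^2) := by
  calc _ = ∫ s in Ioo 0 t, ∫ x in Ioi c, passageKernel x d t s :=
        setIntegral_congr_fun measurableSet_Ioo fun s hs =>
          (integral_passageKernel_Ioi hs.1 hs.2 c).symm
    _ = ∫ x in Ioi c, ∫ s in Ioo 0 t, passageKernel x d t s :=
        (integral_integral_swap_of_nonneg (by unfold passageKernel; fun_prop)
          (fun x s => passageKernel_nonneg x d t s)
          (ae_restrict_of_forall_mem measurableSet_Ioi fun x hx =>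
            integrableOn_passageKernel_Ioo (hc.trans hx) hd ht)
          (ae_restrict_of_forall_mem measurableSet_Ioo fun s hs =>
            integrableOn_passageKernel_Ioi hs.1 c)).symm
    _ = ∫ x in Ioi c, √π / (√x * √t) * exp (-(√x + √d) ^ 2 / t) :=
        setIntegral_congr_fun measurableSet_Ioi fun x hx =>
          integral_passageKernel_Ioo (hc.trans hx) hd ht
    _ = _ := integral_Ioi_sqrt_pi_div_mul_exp hc ht _
end

section
/- For all real numbers x > 1, y > 1 and t > 0, one has exp(−(x+y−2)²/(2t)) ≤ (t/(2(x−1)(y−1))) · [ exp(−(x−y)²/(2t)) − exp(−(x+y−2)²/(2t)) ]. -/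
open Real

theorem exp_mul_le_exp_add_sub_exp (u z : ℝ) : exp u * z ≤ exp (u + z) - exp u := by
  rw [exp_add]
  nlinarith [add_one_le_exp z, exp_pos u]

theorem exp_le_div_mul_exp_add_div_sub_exp (u : ℝ) {c t : ℝ} (hc : 0 < c) (ht : 0 < t) :
    exp u ≤ (t / c) * (exp (u + c / t) - exp u) :=
  calc exp u = (t / c) * (exp u * (c / t)) := by field_simp
    _ ≤ (t / c) * (exp (u + c / t) - exp u) :=
      mul_le_mul_of_nonneg_left (exp_mul_le_exp_add_sub_exp u _) (div_pos ht hc).le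

theorem bessel_lemma3_boundb (x y t : ℝ) (hx : 1 < x) (hy : 1 < y) (ht : 0 < t) :
    Real.exp (-(x + y - 2)^2 / (2*t))
      ≤ (t / (2 * (x - 1) * (y - 1))) *
        (Real.exp (-(x - y)^2 / (2*t)) - Real.exp (-(x + y - 2)^2 / (2*t))) := by
  have hc : 0 < 2 * (x - 1) * (y - 1) := by
    have := mul_pos (sub_pos.2 hx) (sub_pos.2 hy)
    linarith
  -- `(x + y - 2)² - (x - y)² = 4 (x - 1) (y - 1)`
  have hsplit : -(x - y)^2 / (2*t) = -(x + y - 2)^2 / (2*t) + 2 * (x - 1) * (y - 1) / t := by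
    field_simp
    ring
  rw [hsplit]
  exact exp_le_div_mul_exp_add_div_sub_exp _ hc ht
end

section
/- For all real numbers c > 0 and d > 0, the improper integral ∫₀^∞ w^(−3/2) exp(−c·w) exp(−d/w) dw equals √(π/d) · exp(−2√(c·d)). -/
/-!
Substituting `w = x ^ 2` turns the integral into `2 ∫₀^∞ x⁻² e^{-c x² - d / x²} dx`, and completing
the square `c x² + d / x² = (√c x - √d / x)² + 2 √(c d)` pulls out the factor `e^{-2 √(c d)}`.
What remains is a Cauchy–Schlömilch integral: `u = a x - b / x` maps `(0, ∞)` onto `ℝ` with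
Jacobian `a + b / x²`, and the inversion `x ↦ (b / a) / x`, which sends `u` to `-u`, shows that for
an even integrand the two parts `a` and `b / x²` of the Jacobian contribute equally. Hence
`∫₀^∞ (b / x²) e^{-(a x - b / x)²} dx = √π / 2`.
-/

open MeasureTheory Real Set

variable {E : Type*} [NormedAddCommGroup E] [NormedSpace ℝ E]

theorem integral_Ioi_comp_sq (g : ℝ → E) :
    ∫ x in Ioi 0, (2 * x) • g (x ^ 2) = ∫ x in Ioi 0, g x := by
  have h := integral_comp_rpow_Ioi_of_pos (g := g) two_pos
  norm_num at h
  simpa only [rpow_two] using h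

theorem integral_Ioi_comp_const_div (g : ℝ → E) {r : ℝ} (hr : 0 < r) :
    ∫ x in Ioi 0, (r / x ^ 2) • g (r / x) = ∫ x in Ioi 0, g x := by
  have himage : (r / ·) '' Ioi 0 = Ioi (0 : ℝ) := by
    refine (image_subset_iff.2 fun x (hx : 0 < x) ↦ div_pos hr hx).antisymm fun y (hy : 0 < y) ↦ ?_
    exact ⟨r / y, div_pos hr hy, div_div_cancel₀ hr.ne'⟩
  have hderiv : ∀ x ∈ Ioi (0 : ℝ), HasDerivWithinAt (r / ·) (-(r / x ^ 2)) (Ioi 0) x := by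
    intro x hx
    simpa [div_eq_mul_inv] using ((hasDerivAt_inv (ne_of_gt hx)).const_mul r).hasDerivWithinAt
  have hinj : InjOn (r / ·) (Ioi (0 : ℝ)) := fun x _ y _ hxy ↦
    inv_injective (mul_left_cancel₀ hr.ne' hxy)
  conv_rhs => rw [← himage, integral_image_eq_integral_abs_deriv_smul measurableSet_Ioi hderiv hinj]
  refine setIntegral_congr_fun measurableSet_Ioi fun x (hx : 0 < x) ↦ ?_
  rw [abs_neg, abs_of_pos (by positivity)]

theorem hasDerivAt_mul_sub_div (a b : ℝ) {x : ℝ} (hx : x ≠ 0) :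
    HasDerivAt (fun x ↦ a * x - b / x) (a + b / x ^ 2) x := by
  have h : HasDerivAt (fun y ↦ a * y - b * y⁻¹) (a * 1 - b * -(x ^ 2)⁻¹) x :=
    ((hasDerivAt_id' x).const_mul a).sub ((hasDerivAt_inv hx).const_mul b)
  simpa only [div_eq_mul_inv] using h.congr_deriv (by ring)

section CauchySchlomilch

variable {a b : ℝ}

theorem strictMonoOn_mul_sub_div (ha : 0 ≤ a) (hb : 0 < b) :
    StrictMonoOn (fun x ↦ a * x - b / x) (Ioi 0) := fun x (hx : 0 < x) y _ hxy ↦ by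
  have := div_lt_div_of_pos_left hb hx hxy
  have := mul_le_mul_of_nonneg_left hxy.le ha
  simp only
  linarith

theorem image_mul_sub_div_Ioi (ha : 0 < a) (hb : 0 < b) :
    (fun x ↦ a * x - b / x) '' Ioi 0 = univ := by
  refine eq_univ_of_forall fun y ↦ ?_
  -- the positive root of `a x ^ 2 - y x - b`
  set s := √(y ^ 2 + 4 * a * b)
  have hs : s ^ 2 = y ^ 2 + 4 * a * b := sq_sqrt (by positivity)
  have hys : 0 < y + s := by
    have : |y| < s := by
      rw [← sqrt_sq_eq_abs]; exact sqrt_lt_sqrt (sq_nonneg _) (by linarith [mul_pos ha hb])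
    linarith [neg_abs_le y]
  refine ⟨(y + s) / (2 * a), div_pos hys (by positivity), ?_⟩
  field_simp
  linear_combination hs

theorem integral_Ioi_comp_mul_sub_div (ha : 0 < a) (hb : 0 < b) (g : ℝ → E) :
    ∫ x in Ioi 0, (a + b / x ^ 2) • g (a * x - b / x) = ∫ u, g u := by
  conv_rhs => rw [← setIntegral_univ, ← image_mul_sub_div_Ioi ha hb,
    integral_image_eq_integral_abs_deriv_smul measurableSet_Ioi
      (fun x hx ↦ (hasDerivAt_mul_sub_div a b (ne_of_gt hx)).hasDerivWithinAt)
      (strictMonoOn_mul_sub_div ha.le hb).injOn]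
  refine setIntegral_congr_fun measurableSet_Ioi fun x (hx : 0 < x) ↦ ?_
  rw [abs_of_pos (by positivity)]

theorem integrableOn_Ioi_comp_mul_sub_div_iff (ha : 0 < a) (hb : 0 < b) (g : ℝ → E) :
    IntegrableOn (fun x ↦ (a + b / x ^ 2) • g (a * x - b / x)) (Ioi 0) ↔ Integrable g := by
  rw [← integrableOn_univ, ← image_mul_sub_div_Ioi ha hb,
    integrableOn_image_iff_integrableOn_abs_deriv_smul measurableSet_Ioi
      (fun x hx ↦ (hasDerivAt_mul_sub_div a b (ne_of_gt hx)).hasDerivWithinAt)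
      (strictMonoOn_mul_sub_div ha.le hb).injOn]
  refine integrableOn_congr_fun (fun x (hx : 0 < x) ↦ ?_) measurableSet_Ioi
  rw [abs_of_pos (by positivity)]

theorem integral_Ioi_smul_comp_mul_sub_div (ha : 0 < a) (hb : 0 < b) (g : ℝ → E) :
    ∫ x in Ioi 0, a • g (a * x - b / x) = ∫ x in Ioi 0, (b / x ^ 2) • g (b / x - a * x) := by
  rw [← integral_Ioi_comp_const_div _ (div_pos hb ha)]
  refine setIntegral_congr_fun measurableSet_Ioi fun x (hx : 0 < x) ↦ ?_
  have hx := hx.ne'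
  have hweight : b / a / x ^ 2 * a = b / x ^ 2 := by field_simp
  have hpoint : a * (b / a / x) - b / (b / a / x) = b / x - a * x := by field_simp
  rw [smul_smul, hweight, hpoint]

theorem integral_Ioi_div_sq_smul_comp_mul_sub_div (ha : 0 < a) (hb : 0 < b) {g : ℝ → E}
    (hg : Integrable g) (hg_even : ∀ u, g (-u) = g u) :
    ∫ x in Ioi 0, (b / x ^ 2) • g (a * x - b / x) = (2 : ℝ)⁻¹ • ∫ u, g u := by
  have hsum := (integrableOn_Ioi_comp_mul_sub_div_iff ha hb g).2 hg
  have hweight : ∀ x : ℝ, a + b / x ^ 2 ≠ 0 := fun x ↦ by positivity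
  -- `b / x ^ 2` is a fraction, between `0` and `1`, of the Jacobian `a + b / x ^ 2`
  have hB : IntegrableOn (fun x ↦ (b / x ^ 2) • g (a * x - b / x)) (Ioi 0) := by
    refine (hsum.bdd_smul 1 (φ := fun x ↦ b / x ^ 2 / (a + b / x ^ 2))
      (by fun_prop : Measurable _).aestronglyMeasurable
      (ae_of_all _ fun x ↦ ?_)).congr (ae_of_all _ fun x ↦ ?_)
    · rw [norm_of_nonneg (by positivity), div_le_one (by positivity)]
      linarith
    · rw [Pi.smul_apply', smul_smul, div_mul_cancel₀ _ (hweight x)]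
  have hA : IntegrableOn (fun x ↦ a • g (a * x - b / x)) (Ioi 0) := by
    simpa only [add_smul, Pi.sub_def, add_sub_cancel_right] using hsum.sub hB
  have hAB : ∫ x in Ioi 0, a • g (a * x - b / x) =
      ∫ x in Ioi 0, (b / x ^ 2) • g (a * x - b / x) := by
    rw [integral_Ioi_smul_comp_mul_sub_div ha hb]
    congr 1 with x
    rw [← hg_even, neg_sub]
  rw [← integral_Ioi_comp_mul_sub_div ha hb g]
  simp only [add_smul]
  rw [integral_add hA hB, hAB, ← two_smul ℝ, smul_smul, inv_mul_cancel₀ two_ne_zero, one_smul]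

end CauchySchlomilch

theorem exp_neg_mul_sq_mul_exp_neg_div_sq {c d : ℝ} (hc : 0 ≤ c) (hd : 0 ≤ d) {x : ℝ}
    (hx : x ≠ 0) :
    exp (-c * x ^ 2) * exp (-d / x ^ 2) = exp (-2 * √(c * d)) * exp (-(√c * x - √d / x) ^ 2) := by
  rw [← exp_add, ← exp_add, sqrt_mul hc]
  congr 1
  field_simp
  linear_combination x ^ 4 * sq_sqrt hc + sq_sqrt hd

theorem sq_rpow_neg_three_halves {x : ℝ} (hx : 0 ≤ x) : (x ^ 2) ^ (-(3 : ℝ) / 2) = (x ^ 3)⁻¹ := by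
  rw [← rpow_natCast x 2, ← rpow_mul hx, ← rpow_natCast x 3, ← rpow_neg hx]
  norm_num

theorem bessel_gr_formula_neg (c d : ℝ) (hc : 0 < c) (hd : 0 < d) :
    ∫ w in Set.Ioi (0:ℝ), w ^ (-(3:ℝ)/2) * Real.exp (-c*w) * Real.exp (-d/w)
      = Real.sqrt (π / d) * Real.exp (-2 * Real.sqrt (c*d)) := by
  have hb : 0 < √d := sqrt_pos.2 hd
  have hsubst : ∀ x ∈ Ioi (0 : ℝ),
      (2 * x) • ((x ^ 2) ^ (-(3 : ℝ) / 2) * exp (-c * x ^ 2) * exp (-d / x ^ 2)) =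
        (2 / √d * exp (-2 * √(c * d))) • ((√d / x ^ 2) • exp (-(√c * x - √d / x) ^ 2)) :=
    fun x (hx : 0 < x) ↦ by
      rw [mul_assoc _ (exp _), exp_neg_mul_sq_mul_exp_neg_div_sq hc.le hd.le hx.ne',
        sq_rpow_neg_three_halves hx.le, smul_eq_mul, smul_eq_mul, smul_eq_mul]
      field_simp
  have hgauss : ∫ u, exp (-u ^ 2) = √π := by simpa using integral_gaussian 1
  have hCS := integral_Ioi_div_sq_smul_comp_mul_sub_div (g := fun u ↦ exp (-u ^ 2))
    (sqrt_pos.2 hc) hb (by simpa using integrable_exp_neg_mul_sq one_pos) (fun u ↦ by simp)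
  rw [← integral_Ioi_comp_sq, setIntegral_congr_fun measurableSet_Ioi hsubst, integral_smul,
    hCS, hgauss, sqrt_div pi_nonneg, smul_eq_mul, smul_eq_mul]
  field_simp
end

section
/- For all real numbers x ≥ 2, y ≥ 2 and t > 0 satisfying x·y ≥ 2t, one has 0 ≤ exp(−(x−y)²/(2t)) / ( exp(−(x−y)²/(2t)) − exp(−(x+y−2)²/(2t)) ) − 1 ≤ (e/(e−1)) · exp(−x·y/(2t)). -/
/-!
Writing `a = x - 1`, `b = y - 1`, the two Gaussian exponents differ by `2ab/t`, so the ratio minus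
one is `q / (1 - q)` with `q = exp (-2ab/t)`. For `x, y ≥ 2` one has `ab ≥ xy/4`, hence
`q ≤ exp (-xy/(2t))`, and the hypothesis `xy ≥ 2t` gives `q ≤ e⁻¹`, which bounds `1/(1 - q)` by
`e/(e - 1)`.
-/

open Real

lemma div_sub_mul_sub_one {K : Type*} [Field K] {A q : K} (hA : A ≠ 0) (hq : q ≠ 1) :
    A / (A - A * q) - 1 = q / (1 - q) := by
  have h1q : 1 - q ≠ 0 := sub_ne_zero.mpr hq.symm
  rw [← mul_one_sub, div_mul_cancel_left₀ hA, eq_div_iff h1q, sub_mul, inv_mul_cancel₀ h1q]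
  ring

lemma div_one_sub_le_div_one_sub {q r c : ℝ} (hq : 0 ≤ q) (hqr : q ≤ r) (hqc : q ≤ c)
    (hc : c < 1) : q / (1 - q) ≤ r / (1 - c) :=
  div_le_div₀ (hq.trans hqr) hqr (by linarith) (by linarith)

lemma exp_one_div_exp_one_sub_one : exp 1 / (exp 1 - 1) = 1 / (1 - exp (-1)) := by
  have he : exp 1 - 1 ≠ 0 := by linarith [add_one_lt_exp (one_ne_zero (α := ℝ))]
  rw [exp_neg]
  field_simp

lemma mul_le_four_mul_sub_one_mul_sub_one {x y : ℝ} (hx : 2 ≤ x) (hy : 2 ≤ y) :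
    x * y ≤ 4 * ((x - 1) * (y - 1)) := by
  nlinarith [mul_nonneg (sub_nonneg.mpr hx) (sub_nonneg.mpr hy)]

lemma exp_neg_sq_add_sub_two_div (x y t : ℝ) (ht : t ≠ 0) :
    exp (-(x + y - 2) ^ 2 / (2 * t)) =
      exp (-(x - y) ^ 2 / (2 * t)) * exp (-(2 * ((x - 1) * (y - 1))) / t) := by
  rw [← exp_add]
  congr 1
  field_simp
  ring

theorem bessel_ratio_estimate (x y t : ℝ) (hx : 2 ≤ x) (hy : 2 ≤ y) (ht : 0 < t)
    (h : 2 * t ≤ x * y) :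
    0 ≤ Real.exp (-(x - y)^2 / (2*t)) /
          (Real.exp (-(x - y)^2 / (2*t)) - Real.exp (-(x + y - 2)^2 / (2*t))) - 1 ∧
      Real.exp (-(x - y)^2 / (2*t)) /
          (Real.exp (-(x - y)^2 / (2*t)) - Real.exp (-(x + y - 2)^2 / (2*t))) - 1
        ≤ (Real.exp 1 / (Real.exp 1 - 1)) * Real.exp (-(x*y) / (2*t)) := by
  set q := exp (-(2 * ((x - 1) * (y - 1))) / t)
  have hxy := mul_le_four_mul_sub_one_mul_sub_one hx hy
  have hq_le_exp : q ≤ exp (-(x * y) / (2 * t)) := by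
    refine exp_le_exp.mpr ?_
    rw [div_le_div_iff₀ ht (by positivity)]
    nlinarith
  have hq_le_inv_e : q ≤ exp (-1) := by
    refine exp_le_exp.mpr ?_
    rw [div_le_iff₀ ht]
    linarith
  have hinv_e_lt_one : exp (-1) < 1 := exp_lt_one_iff.mpr (by norm_num)
  have hq_lt_one : q < 1 := hq_le_inv_e.trans_lt hinv_e_lt_one
  rw [exp_neg_sq_add_sub_two_div x y t ht.ne', div_sub_mul_sub_one (exp_pos _).ne' hq_lt_one.ne]
  refine ⟨div_nonneg (exp_pos _).le (sub_nonneg.mpr hq_lt_one.le), ?_⟩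
  rw [exp_one_div_exp_one_sub_one, one_div_mul_eq_div]
  exact div_one_sub_le_div_one_sub (exp_pos _).le hq_le_exp hq_le_inv_e hinv_e_lt_one
end

section
/- For all real numbers A > 0, B > 0 and t > 0, one has ∫₀ᵗ s^(−3/2) (t−s)^(−1/2) exp(−A/s) exp(−B/(t−s)) ds = t^(−1/2) · exp(−(A+B)/t) · ∫₀^∞ w^(−1/2) exp(−A·w) exp(−B/(t²·w)) dw. -/
/-!
Substitute `w = 1/s - 1/t`, which maps `(0, t)` bijectively onto `(0, ∞)` with `|dw/ds| = 1/s²`.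
Under it `t - s = t s w` and `A/s + B/(t - s) = (A + B)/t + A w + B/(t² w)`, so the integrand
on `(0, t)` is `t^(-1/2) e^(-(A+B)/t) / s²` times the integrand on `(0, ∞)`.
-/

open MeasureTheory Real Set

theorem image_inv_sub_inv_Ioo_zero {t : ℝ} (ht : 0 < t) :
    (fun s : ℝ => s⁻¹ - t⁻¹) '' Ioo 0 t = Ioi 0 := by
  rw [show (fun s : ℝ => s⁻¹ - t⁻¹) = (· - t⁻¹) ∘ (·⁻¹) from rfl, image_comp, image_inv_eq_inv,
    inv_Ioo_0_left ht]
  simp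

theorem setIntegral_Ioi_zero_eq_setIntegral_Ioo_inv_sub_inv {E : Type*} [NormedAddCommGroup E]
    [NormedSpace ℝ E] {t : ℝ} (ht : 0 < t) (g : ℝ → E) :
    ∫ w in Ioi 0, g w = ∫ s in Ioo 0 t, (s ^ 2)⁻¹ • g (s⁻¹ - t⁻¹) := by
  have hderiv : ∀ s ∈ Ioo 0 t, HasDerivWithinAt (fun s => s⁻¹ - t⁻¹) (-(s ^ 2)⁻¹) (Ioo 0 t) s :=
    fun s hs => ((hasDerivAt_inv hs.1.ne').sub_const t⁻¹).hasDerivWithinAt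
  have hinj : InjOn (fun s : ℝ => s⁻¹ - t⁻¹) (Ioo 0 t) :=
    fun _ _ _ _ hab => inv_injective (sub_left_injective hab)
  rw [← image_inv_sub_inv_Ioo_zero ht,
    integral_image_eq_integral_abs_deriv_smul measurableSet_Ioo hderiv hinj]
  simp only [abs_neg, abs_inv, abs_sq]

theorem sub_rpow_eq_mul_rpow_inv_sub_inv {s t : ℝ} (hs : 0 < s) (hst : s ≤ t) (r : ℝ) :
    (t - s) ^ r = t ^ r * s ^ r * (s⁻¹ - t⁻¹) ^ r := by
  have ht : 0 < t := hs.trans_le hst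
  have hw : 0 ≤ s⁻¹ - t⁻¹ := sub_nonneg.2 (inv_anti₀ hs hst)
  rw [← mul_rpow ht.le hs.le, ← mul_rpow (by positivity) hw]
  congr 1
  field_simp

theorem neg_div_add_neg_div_sub_eq {A B s t : ℝ} (hs : s ≠ 0) (ht : t ≠ 0) (hst : s ≠ t) :
    -A / s + -B / (t - s) = -(A + B) / t + (-A * (s⁻¹ - t⁻¹) + -B / (t ^ 2 * (s⁻¹ - t⁻¹))) := by
  have hts : t - s ≠ 0 := sub_ne_zero.2 hst.symm
  rw [inv_sub_inv hs ht]
  field_simp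
  ring

theorem bessel_change_of_variables_general (A B t : ℝ) (ht : 0 < t) :
    ∫ s in Set.Ioo (0:ℝ) t,
        s ^ (-(3:ℝ)/2) * (t - s) ^ (-(1:ℝ)/2) * Real.exp (-A/s) * Real.exp (-B/(t-s))
      = t ^ (-(1:ℝ)/2) * Real.exp (-(A + B)/t) *
        ∫ w in Set.Ioi (0:ℝ), w ^ (-(1:ℝ)/2) * Real.exp (-A*w) * Real.exp (-B/(t^2*w)) := by
  rw [setIntegral_Ioi_zero_eq_setIntegral_Ioo_inv_sub_inv ht, ← integral_const_mul]
  refine setIntegral_congr_fun measurableSet_Ioo fun s ⟨hs, hst⟩ => ?_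
  have hpow : s ^ (-(3:ℝ)/2) * s ^ (-(1:ℝ)/2) = (s ^ 2)⁻¹ := by
    rw [← rpow_add hs, ← rpow_natCast, ← rpow_neg hs.le]
    norm_num
  calc s ^ (-(3:ℝ)/2) * (t - s) ^ (-(1:ℝ)/2) * exp (-A/s) * exp (-B/(t-s))
      = s ^ (-(3:ℝ)/2) * (t - s) ^ (-(1:ℝ)/2) * exp (-A/s + -B/(t-s)) := by
        rw [exp_add, mul_assoc]
    _ = _ := by
        rw [sub_rpow_eq_mul_rpow_inv_sub_inv hs hst.le,
          neg_div_add_neg_div_sub_eq hs.ne' (hs.trans hst).ne' hst.ne, exp_add, exp_add, ← hpow,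
          smul_eq_mul]
        ring

theorem bessel_change_of_variables (A B t : ℝ) (hA : 0 < A) (hB : 0 < B) (ht : 0 < t) :
    ∫ s in Set.Ioo (0:ℝ) t,
        s ^ (-(3:ℝ)/2) * (t - s) ^ (-(1:ℝ)/2) * Real.exp (-A/s) * Real.exp (-B/(t-s))
      = t ^ (-(1:ℝ)/2) * Real.exp (-(A + B)/t) *
        ∫ w in Set.Ioi (0:ℝ), w ^ (-(1:ℝ)/2) * Real.exp (-A*w) * Real.exp (-B/(t^2*w)) :=
  bessel_change_of_variables_general A B t ht
end
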